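/- Under the CA-OCSC recursion, for any erasure sequence {E_t} ⊆ {0,1}, any sequence of source symbols, any sequence of predictive distributions, any target outage level D ∈ (0,1], any ε ∈ (0, D), and any adjustment sequence with δ^tgt_t ≤ D − ε for all t, the parameter sequence satisfies λ_t ≥ −η(1 − ε) for all t ≥ 1. (Lemma 2, CA-OCSC case) -/

import Mathlib

/-! While `λ_t < 0` the threshold `max 0 λ_t` vanishes, so no outage is declared and the
update adds `η (D - δ^tgt_t) ≥ η ε > 0`: a negative parameter never decreases. While
`λ_t ≥ 0` one update lowers it by at most `η (1 - ε)`, since the erased outage indicator is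
at most `1`. Hence `λ_t` can only drop below `0` from a nonnegative value, landing at
`-η (1 - ε)` or above, and it stays above that level until it becomes nonnegative again. -/

theorem lower_bound_of_steps {u : ℕ → ℝ} {c : ℝ} {n₀ : ℕ} (hinit : -c ≤ u n₀)
    (hneg : ∀ t, n₀ ≤ t → u t < 0 → u t ≤ u (t + 1))
    (hnonneg : ∀ t, n₀ ≤ t → 0 ≤ u t → u t - c ≤ u (t + 1)) :
    ∀ t, n₀ ≤ t → -c ≤ u t := by
  intro t ht
  induction t, ht using Nat.le_induction with
  | base => exact hinit
  | succ t ht ih =>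
    rcases lt_or_ge (u t) 0 with hu | hu
    · exact ih.trans (hneg t ht hu)
    · linarith [hnonneg t ht hu]

theorem ite_lt_max_zero_eq_zero {q l : ℝ} (hq : 0 ≤ q) (hl : l ≤ 0) :
    (if q < max 0 l then (1 : ℝ) else 0) = 0 := by
  rw [max_eq_left hl, if_neg hq.not_gt]

theorem one_sub_mul_indicator_le_one {e : ℝ} (he : e = 0 ∨ e = 1) (P : Prop) [Decidable P] :
    (1 - e) * (if P then (1 : ℝ) else 0) ≤ 1 := by
  rcases he with rfl | rfl <;> split_ifs <;> norm_num

theorem ca_ocsc_lambda_lower_bound_general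
    {𝒳 : Type*}
    (X : ℕ → 𝒳) (p : ℕ → 𝒳 → ℝ)
    (hp0 : ∀ t x, 0 ≤ p t x)
    (E : ℕ → ℝ) (hE : ∀ t, E t = 0 ∨ E t = 1)
    (D ε : ℝ) (hD : 0 < D ∧ D ≤ 1) (hε : 0 < ε ∧ ε < D)
    (δtgt : ℕ → ℝ) (hδtgt : ∀ t, 1 ≤ t → δtgt t ≤ D - ε)
    (η : ℝ) (hη : 0 < η)
    (lam₀ : ℝ) (hlam₀ : 0 < lam₀)
    (lam s : ℕ → ℝ) (hinit : lam 1 = lam₀)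
    (hs : ∀ t, s t = max 0 (lam t))
    (hupd : ∀ t, 1 ≤ t →
      lam (t + 1) = lam t
        - η * ((1 - E t) * (if p t (X t) < s t then (1 : ℝ) else 0) - D + δtgt t)) :
    ∀ t, 1 ≤ t → -(η * (1 - ε)) ≤ lam t := by
  have hε1 : 0 < 1 - ε := by linarith [hε.2, hD.2]
  refine lower_bound_of_steps ?_ (fun t ht hneg => ?_) (fun t ht _ => ?_)
  · rw [hinit]
    nlinarith
  · have hdrift : η * (0 - D + δtgt t) ≤ 0 :=
      mul_nonpos_of_nonneg_of_nonpos hη.le (by linarith [hδtgt t ht, hε.1])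
    rw [hupd t ht, hs t, ite_lt_max_zero_eq_zero (hp0 t (X t)) hneg.le, mul_zero]
    linarith
  · have hincr : η * ((1 - E t) * (if p t (X t) < s t then (1 : ℝ) else 0) - D + δtgt t)
        ≤ η * (1 - ε) :=
      mul_le_mul_of_nonneg_left
        (by linarith [one_sub_mul_indicator_le_one (hE t) (p t (X t) < s t), hδtgt t ht]) hη.le
    rw [hupd t ht]
    linarith

/-- **Lemma 2, CA-OCSC case (parameter lower bound under erasures).**
Under the CA-OCSC recursion (threshold `s t = max 0 (lam t)`, high-probability set
`𝒳_t = {x | p t x ≥ s t}`, update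
`lam (t+1) = lam t − η ((1 − E_t) 𝟙{X_t ∉ 𝒳_t} − D + δ^tgt_t)`), for any erasure
sequence `{E_t} ⊆ {0,1}`, any source symbols, any predictive distributions, any
`D ∈ (0,1]`, any `ε ∈ (0, D)`, and any adjustment sequence with `δ^tgt_t ≤ D − ε`,
the parameter sequence satisfies `lam t ≥ −η (1 − ε)` for all `t ≥ 1`. -/
theorem ca_ocsc_lambda_lower_bound
    {𝒳 : Type*} [Fintype 𝒳] [Nonempty 𝒳]
    (X : ℕ → 𝒳) (p : ℕ → 𝒳 → ℝ)
    (hp0 : ∀ t x, 0 ≤ p t x) (hp1 : ∀ t, ∑ x, p t x = 1)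
    (E : ℕ → ℝ) (hE : ∀ t, E t = 0 ∨ E t = 1)
    (D ε : ℝ) (hD : 0 < D ∧ D ≤ 1) (hε : 0 < ε ∧ ε < D)
    (δtgt : ℕ → ℝ) (hδtgt : ∀ t, 1 ≤ t → δtgt t ≤ D - ε)
    (η : ℝ) (hη : 0 < η)
    (lam₀ : ℝ) (hlam₀ : 0 < lam₀)
    (lam s : ℕ → ℝ) (hinit : lam 1 = lam₀)
    (hs : ∀ t, s t = max 0 (lam t))
    (hupd : ∀ t, 1 ≤ t →
      lam (t + 1) = lam t
        - η * ((1 - E t) * (if p t (X t) < s t then (1 : ℝ) else 0) - D + δtgt t)) :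
    ∀ t, 1 ≤ t → -(η * (1 - ε)) ≤ lam t :=
  ca_ocsc_lambda_lower_bound_general X p hp0 E hE D ε hD hε δtgt hδtgt η hη lam₀ hlam₀ lam s hinit
    hs hupd
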